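/- arXiv:2311.02593 — 3 statements merged into one kernel-verified Lean document; each statement's English description precedes it below -/
import Mathlib

section
/- Let d, r, n be positive integers with n odd, and assume that either (d is odd and n < d) or d is even. Let c^1, …, c^d be a family of Clifford matrices of rank r. Then for every map α : {1, …, n} → {1, …, d} one has tr(c^{α(1)} · c^{α(2)} · … · c^{α(n)}) = 0, where tr is the trace of complex r×r matrices. -/
/-- A family `c 1, …, c d` of complex `r × r` matrices is a family of Clifford matrices if
`c i * c j + c j * c i = -2 δ_{ij} 1`. -/
def CliffordFamily (d r : ℕ) (c : Fin d → Matrix (Fin r) (Fin r) ℂ) : Prop :=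
  ∀ i j : Fin d, c i * c j + c j * c i = if i = j then (-2 : ℂ) • (1 : Matrix (Fin r) (Fin r) ℂ) else 0

lemma clifford_anticomm {d r : ℕ} {c : Fin d → Matrix (Fin r) (Fin r) ℂ}
    (hc : CliffordFamily d r c) {j k : Fin d} (h : j ≠ k) :
    c k * c j = -(c j * c k) := by
  have := hc k j
  rw [if_neg (fun hh => h hh.symm)] at this
  exact eq_neg_of_add_eq_zero_left this

lemma clifford_sq {d r : ℕ} {c : Fin d → Matrix (Fin r) (Fin r) ℂ}
    (hc : CliffordFamily d r c) (k : Fin d) :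
    c k * c k = -1 := by
  have := hc k k
  rw [if_pos rfl] at this
  have h2 : (2 : ℂ) • (c k * c k) = (2 : ℂ) • (-1 : Matrix (Fin r) (Fin r) ℂ) := by
    rw [two_smul]
    simpa [neg_smul, two_smul] using this
  exact smul_right_injective _ (by norm_num) h2

lemma clifford_swap {d r : ℕ} {c : Fin d → Matrix (Fin r) (Fin r) ℂ}
    (hc : CliffordFamily d r c) (k : Fin d) (β : List (Fin d)) :
    c k * (β.map c).prod =
      ((-1 : ℂ) ^ β.countP (fun j => decide (j ≠ k))) • ((β.map c).prod * c k) := by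
  induction β with
  | nil => simp
  | cons j t ih =>
    rcases eq_or_ne j k with hj | hj
    · subst hj
      rw [List.map_cons, List.prod_cons, List.countP_cons]
      calc c j * (c j * (List.map c t).prod)
          = c j * ((-1 : ℂ) ^ List.countP (fun x => decide (x ≠ j)) t •
              ((List.map c t).prod * c j)) := by rw [ih]
        _ = (-1 : ℂ) ^ List.countP (fun x => decide (x ≠ j)) t •
              ((c j * (List.map c t).prod) * c j) := by
            rw [mul_smul_comm, mul_assoc]
        _ = (-1 : ℂ) ^ (List.countP (fun x => decide (x ≠ j)) t +
              if (fun x => decide (x ≠ j)) j = true then 1 else 0) •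
              ((c j * (List.map c t).prod) * c j) := by simp
    · rw [List.map_cons, List.prod_cons, ← mul_assoc, clifford_anticomm hc hj, neg_mul,
        mul_assoc, ih, mul_smul_comm, List.countP_cons]
      simp [hj, pow_succ, mul_assoc, smul_smul]

/-- For `n` odd and either (`d` odd and `n < d`) or `d` even, the trace of any
product of `n` Clifford matrices vanishes. -/
theorem trace_clifford_prod_eq_zero (d r n : ℕ) (hd : 1 ≤ d) (hr : 1 ≤ r) (hn : 1 ≤ n)
    (hnodd : Odd n) (hcase : (Odd d ∧ n < d) ∨ Even d)
    (c : Fin d → Matrix (Fin r) (Fin r) ℂ) (hc : CliffordFamily d r c)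
    (α : Fin n → Fin d) :
    Matrix.trace (List.ofFn fun i : Fin n => c (α i)).prod = 0 := by
  classical
  have hM : (List.ofFn fun i : Fin n => c (α i)) = (List.ofFn α).map c := by
    rw [List.map_ofFn]; rfl
  rw [hM]
  set β := List.ofFn α with hβ
  have hlen : β.length = n := by simp [hβ]
  have hsum : ∑ k : Fin d, β.count k = n := by
    have := Multiset.sum_count_eq_card (s := (Finset.univ : Finset (Fin d)))
      (m := (β : Multiset (Fin d))) (by simp)
    simpa [hlen] using this
  have hex : ∃ k : Fin d, Even (β.count k) := by
    by_contra h
    push_neg at h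
    simp only [Nat.not_even_iff_odd] at h
    rcases hcase with ⟨hdo, hnd⟩ | hde
    · have hle : d ≤ ∑ k : Fin d, β.count k := by
        calc d = ∑ _k : Fin d, 1 := by simp
        _ ≤ _ := Finset.sum_le_sum (fun k _ => (h k).pos)
      omega
    · have h0 : ((n : ZMod 2)) = 0 := by
        rw [← hsum]
        push_cast
        calc ∑ k : Fin d, ((β.count k : ZMod 2))
            = ∑ _k : Fin d, (1 : ZMod 2) := by
              refine Finset.sum_congr rfl (fun k _ => ?_)
              have hk := (h k)
              rw [Nat.odd_iff] at hk
              rw [← ZMod.natCast_mod, hk, Nat.cast_one]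
          _ = (d : ZMod 2) := by simp
          _ = 0 := by
              obtain ⟨e, he⟩ := hde
              subst he
              push_cast
              ring_nf
              rw [show ((2 : ZMod 2)) = 0 by decide]
              ring
      have hn1 : ((n : ZMod 2)) = 1 := by
        rw [Nat.odd_iff] at hnodd
        rw [← ZMod.natCast_mod, hnodd, Nat.cast_one]
      rw [hn1] at h0
      exact one_ne_zero h0
  obtain ⟨k, hk⟩ := hex
  have hcount : β.countP (fun j => decide (j ≠ k)) + β.count k = n := by
    rw [← hlen, β.length_eq_countP_add_countP (fun j => decide (j ≠ k))]
    congr 1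
    refine List.countP_congr (fun a _ => ?_)
    simp
  have hcpodd : Odd (β.countP fun j => decide (j ≠ k)) := by
    rw [Nat.odd_iff]
    rcases hk with ⟨e, he⟩; rcases hnodd with ⟨m, hm⟩; omega
  have hswap := clifford_swap hc k β
  rw [Odd.neg_one_pow hcpodd, neg_one_smul] at hswap
  have hsq := clifford_sq hc k
  have h1 : c k * ((β.map c).prod * c k) = (β.map c).prod := by
    rw [← mul_assoc, hswap, neg_mul, mul_assoc, hsq, mul_neg_one, neg_neg]
  have h2 : Matrix.trace (c k * ((β.map c).prod * c k)) = - Matrix.trace ((β.map c).prod) := by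
    rw [Matrix.trace_mul_comm, mul_assoc, hsq, mul_neg_one, Matrix.trace_neg]
  rw [h1] at h2
  linear_combination h2 / 2
end

section
/- Let d be an odd positive integer, r ≥ 1, and let c^1, …, c^d be a family of Clifford matrices of rank r. Set κ_c := tr(c^1 · c^2 · … · c^d). Then for every map α : {1, …, d} → {1, …, d} one has tr(c^{α(1)} · c^{α(2)} · … · c^{α(d)}) = ε_α · κ_c, where ε_α is the Levi-Civita symbol: ε_α = 0 if α is not a bijection, and ε_α is the sign of α viewed as a permutation of {1, …, d} if α is a bijection. -/
/-- The Levi-Civita symbol of a map `α : Fin d → Fin d`: the sign of `α` as a permutation if `α`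
is bijective, and `0` otherwise. -/
noncomputable def leviCivita {d : ℕ} (α : Fin d → Fin d) : ℂ :=
  if h : Function.Bijective α then ((Equiv.Perm.sign (Equiv.ofBijective α h) : ℤ) : ℂ) else 0

section aux

variable {d r : ℕ} (c : Fin d → Matrix (Fin r) (Fin r) ℂ) (hc : CliffordFamily d r c)

include hc

lemma cl_sq (i : Fin d) : c i * c i = -1 := by
  have h := hc i i
  rw [if_pos rfl] at h
  have h2 : (2 : ℂ) • (c i * c i) = (2 : ℂ) • (-1 : Matrix (Fin r) (Fin r) ℂ) := by
    rw [two_smul, h, smul_neg, neg_smul]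
  exact smul_right_injective _ two_ne_zero h2

lemma cl_anticomm {i j : Fin d} (h : i ≠ j) : c i * c j = -(c j * c i) := by
  have h' := hc i j
  rw [if_neg h] at h'
  exact eq_neg_of_add_eq_zero_left h'

lemma cl_move (x : Fin d) (B : List (Fin d)) (hB : ∀ b ∈ B, b ≠ x) :
    c x * (B.map c).prod = ((-1 : ℂ) ^ B.length) • ((B.map c).prod * c x) := by
  induction B with
  | nil => simp
  | cons b t ih =>
    have hbx : x ≠ b := (hB b List.mem_cons_self).symm
    simp only [List.map_cons, List.prod_cons, List.length_cons]
    rw [← mul_assoc, cl_anticomm c hc hbx, neg_mul, mul_assoc,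
      ih (fun b hb => hB b (List.mem_cons_of_mem _ hb)), mul_smul_comm, pow_succ]
    rw [← neg_smul]
    congr 1
    · ring
    · rw [mul_assoc]

lemma cl_trace_eq_zero (k : Fin d) (w : List (Fin d)) (hw : Odd w.length)
    (hk : ∀ b ∈ w, b ≠ k) : Matrix.trace ((w.map c).prod) = 0 := by
  set P := (w.map c).prod with hP
  have h1 : c k * P = -(P * c k) := by
    rw [cl_move c hc k w hk, hw.neg_one_pow, neg_smul, one_smul]
  have h2 : P = c k * (P * c k) := by
    rw [← mul_assoc, h1, neg_mul, mul_assoc, cl_sq c hc, mul_neg, mul_one, neg_neg]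
  have h3 : Matrix.trace P = -Matrix.trace P := by
    conv_lhs => rw [h2]
    rw [Matrix.trace_mul_comm, mul_assoc, cl_sq c hc, mul_neg, mul_one, Matrix.trace_neg]
  linear_combination h3 / 2

lemma cl_key (A B C : List (Fin d)) {x y : Fin d} (hxy : x ≠ y)
    (hBx : ∀ b ∈ B, b ≠ x) (hBy : ∀ b ∈ B, b ≠ y) :
    ((A ++ x :: (B ++ y :: C)).map c).prod = -((A ++ y :: (B ++ x :: C)).map c).prod := by
  simp only [List.map_append, List.map_cons, List.prod_append, List.prod_cons]
  have mv : ∀ (z : Fin d) (Q : Matrix (Fin r) (Fin r) ℂ), (∀ b ∈ B, b ≠ z) →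
      c z * ((B.map c).prod * Q) = ((-1 : ℂ) ^ B.length) • ((B.map c).prod * (c z * Q)) := by
    intro z Q hz
    rw [← mul_assoc, cl_move c hc z B hz, smul_mul_assoc, mul_assoc]
  rw [mv x _ hBx, mv y _ hBy, ← mul_assoc (c x), cl_anticomm c hc hxy, neg_mul, mul_assoc]
  simp [mul_neg, smul_neg]

omit hc in
lemma cl_map_swap_eq_self {x y : Fin d} (l : List (Fin d)) (hx : x ∉ l) (hy : y ∉ l) :
    l.map (Equiv.swap x y) = l := by
  induction l with
  | nil => rfl
  | cons a t ih =>
    simp only [List.mem_cons, not_or] at hx hy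
    rw [List.map_cons, Equiv.swap_apply_of_ne_of_ne (Ne.symm hx.1) (Ne.symm hy.1),
      ih hx.2 hy.2]

lemma cl_step (f : Equiv.Perm (Fin d)) {x y : Fin d} (hxy : x ≠ y)
    (A B C : List (Fin d)) (h : List.finRange d = A ++ x :: (B ++ y :: C)) :
    ((List.finRange d).map fun i => c (f (Equiv.swap x y i))).prod
      = -(((List.finRange d).map fun i => c (f i)).prod) := by
  have hnd : (A ++ x :: (B ++ y :: C)).Nodup := h ▸ List.nodup_finRange d
  rw [List.nodup_append] at hnd
  obtain ⟨hA, hxBC, hdisj⟩ := hnd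
  rw [List.nodup_cons] at hxBC
  obtain ⟨hxBC, hBC⟩ := hxBC
  rw [List.nodup_append] at hBC
  obtain ⟨hB, hyC, hdisj2⟩ := hBC
  rw [List.nodup_cons] at hyC
  obtain ⟨hyC, hC⟩ := hyC
  -- memberships
  have hxA : x ∉ A := fun hmem => hdisj x hmem x List.mem_cons_self rfl
  have hyA : y ∉ A := fun hmem =>
    hdisj y hmem y (List.mem_cons_of_mem _ (List.mem_append_right _ List.mem_cons_self)) rfl
  have hxB : x ∉ B := fun hmem => hxBC (List.mem_append_left _ hmem)
  have hyB : y ∉ B := fun hmem => hdisj2 y hmem y List.mem_cons_self rfl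
  have hxC : x ∉ C := fun hmem =>
    hxBC (List.mem_append_right _ (List.mem_cons_of_mem _ hmem))
  -- the swapped list
  have hmap : (A ++ x :: (B ++ y :: C)).map (Equiv.swap x y) = A ++ y :: (B ++ x :: C) := by
    simp only [List.map_append, List.map_cons, Equiv.swap_apply_left, Equiv.swap_apply_right]
    rw [cl_map_swap_eq_self A hxA hyA, cl_map_swap_eq_self B hxB hyB,
      cl_map_swap_eq_self C hxC hyC]
  have hcomp : ((List.finRange d).map fun i => c (f (Equiv.swap x y i)))
      = ((A ++ y :: (B ++ x :: C)).map fun i => c (f i)) := by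
    conv_lhs => rw [h]
    rw [← hmap, List.map_map]
    rfl
  rw [hcomp, h]
  -- now rewrite both sides as `map c` of `map f` lists and apply cl_key
  have e1 : ((A ++ y :: (B ++ x :: C)).map fun i => c (f i))
      = ((A.map f ++ f y :: (B.map f ++ f x :: C.map f)).map c) := by
    simp only [List.map_append, List.map_cons, List.map_map]
    rfl
  have e2 : ((A ++ x :: (B ++ y :: C)).map fun i => c (f i))
      = ((A.map f ++ f x :: (B.map f ++ f y :: C.map f)).map c) := by
    simp only [List.map_append, List.map_cons, List.map_map]
    rfl
  rw [e1, e2]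
  have hfxy : f y ≠ f x := fun hEq => hxy (f.injective hEq).symm
  have hBfx : ∀ b ∈ B.map f, b ≠ f y := by
    rintro b hb
    obtain ⟨b0, hb0, rfl⟩ := List.mem_map.mp hb
    exact fun hEq => hyB (f.injective hEq ▸ hb0)
  have hBfy : ∀ b ∈ B.map f, b ≠ f x := by
    rintro b hb
    obtain ⟨b0, hb0, rfl⟩ := List.mem_map.mp hb
    exact fun hEq => hxB (f.injective hEq ▸ hb0)
  exact cl_key c hc (A.map f) (B.map f) (C.map f) hfxy hBfx hBfy

lemma cl_perm (σ : Equiv.Perm (Fin d)) :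
    ((List.finRange d).map fun i => c (σ i)).prod
      = ((Equiv.Perm.sign σ : ℤ) : ℂ) • ((List.finRange d).map c).prod := by
  refine Equiv.Perm.swap_induction_on' σ ?_ ?_
  · simp
  · intro f x y hxy ih
    have hword : ((List.finRange d).map fun i => c ((f * Equiv.swap x y) i)).prod
        = -(((List.finRange d).map fun i => c (f i)).prod) := by
      have hx : x ∈ List.finRange d := List.mem_finRange x
      obtain ⟨A, R, hAR⟩ := List.append_of_mem hx
      have hy : y ∈ A ++ x :: R := hAR ▸ List.mem_finRange y
      rcases List.mem_append.mp hy with hyA | hyR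
      · -- y occurs before x
        obtain ⟨A1, A2, rfl⟩ := List.append_of_mem hyA
        have hdec : List.finRange d = A1 ++ y :: (A2 ++ x :: R) := by
          rw [hAR]; simp
        have := cl_step c hc f hxy.symm A1 A2 R hdec
        rw [Equiv.swap_comm x y]
        exact this
      · rcases List.mem_cons.mp hyR with hEq | hyR
        · exact absurd hEq.symm hxy
        · obtain ⟨B, C, rfl⟩ := List.append_of_mem hyR
          have hdec : List.finRange d = A ++ x :: (B ++ y :: C) := by
            rw [hAR]
          exact cl_step c hc f hxy A B C hdec
    rw [hword, ih]
    have hsign : ((Equiv.Perm.sign (f * Equiv.swap x y) : ℤ) : ℂ)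
        = -((Equiv.Perm.sign f : ℤ) : ℂ) := by
      rw [Equiv.Perm.sign_mul, Equiv.Perm.sign_swap hxy]
      push_cast
      ring
    rw [hsign, neg_smul]

end aux

/-- For `d` odd, the trace of a product `c^{α(1)} ⋯ c^{α(d)}` of `d` Clifford
matrices equals `ε_α · κ_c` where `κ_c = tr (c^1 ⋯ c^d)` and `ε_α` is the Levi-Civita symbol. -/
theorem trace_clifford_prod_eq_leviCivita_mul (d r : ℕ) (hd : Odd d) (hd1 : 1 ≤ d) (hr : 1 ≤ r)
    (c : Fin d → Matrix (Fin r) (Fin r) ℂ) (hc : CliffordFamily d r c)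
    (α : Fin d → Fin d) :
    Matrix.trace (List.ofFn fun i : Fin d => c (α i)).prod =
      leviCivita α * Matrix.trace (List.ofFn fun i : Fin d => c i).prod := by
  by_cases h : Function.Bijective α
  · rw [leviCivita, dif_pos h]
    have key := cl_perm c hc (Equiv.ofBijective α h)
    have hco : ⇑(Equiv.ofBijective α h) = α := rfl
    rw [hco] at key
    rw [List.ofFn_eq_map, List.ofFn_eq_map, key, Matrix.trace_smul, smul_eq_mul]
  · rw [leviCivita, dif_neg h, zero_mul]
    have hsurj : ¬Function.Surjective α := by
      intro hs
      exact h ⟨Finite.injective_iff_surjective.mpr hs, hs⟩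
    simp only [Function.Surjective, not_forall, not_exists] at hsurj
    obtain ⟨k, hk⟩ := hsurj
    have hword : (List.ofFn fun i : Fin d => c (α i)) = (List.ofFn α).map c := by
      rw [List.map_ofFn]
      rfl
    rw [hword]
    apply cl_trace_eq_zero c hc k
    · rwa [List.length_ofFn]
    · intro b hb
      obtain ⟨i, rfl⟩ := List.mem_ofFn.mp hb
      exact fun hEq => hk i hEq
end

section
/- Let d, r ≥ 1 be integers and let c^1, …, c^d be a family of Clifford matrices of rank r. Let ψ : ℝ^d → ℝ be smooth and compactly supported with 0 ≤ ψ ≤ 1, support contained in the closed ball of radius 1/2 about 0, and ψ ≡ 1 on the closed ball of radius 1/4 about 0. Define g : ℝ^d → M_r(ℂ) by g(x) := (1 − ψ(x)) · Σ_{j=1}^d (x_j/|x|) c^j for x ≠ 0 and g(0) := 0. Then: (i) g is smooth on ℝ^d; (ii) there is a constant C < ∞ such that ‖(∂_i g)(x)‖ ≤ C (1 + |x|)^{−1} and ‖(Δ g)(x)‖ ≤ C (1 + |x|)^{−1} for all x ∈ ℝ^d and all i ∈ {1, …, d}, where Δ := −Σ_i ∂_i² acts entrywise and ‖·‖ is the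 operator norm on M_r(ℂ); (iii) consequently, for every twice continuously differentiable f : ℝ^d → ℂ^r one has Δ(g f) − g (Δ f) = −2 Σ_{i=1}^d (∂_i g)(∂_i f) + (Δ g) f, so the commutator [Δ, g] is a first-order differential operator with smooth coefficients bounded by C(1+|x|)^{−1}. -/
open MeasureTheory
open scoped Matrix.Norms.L2Operator

noncomputable section

/-- The partial derivative `∂_i` of a vector-valued function on `ℝ^d`. -/
def pderivV {d : ℕ} {V : Type*} [NormedAddCommGroup V] [NormedSpace ℝ V] (i : Fin d)
    (F : EuclideanSpace ℝ (Fin d) → V) : EuclideanSpace ℝ (Fin d) → V :=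
  fun x => fderiv ℝ F x (EuclideanSpace.single i 1)

/-- The (positive sign convention) Laplacian `Δ = −Σ_i ∂_i²` acting (componentwise) on
vector-valued functions on `ℝ^d`. -/
def laplacianV {d : ℕ} {V : Type*} [NormedAddCommGroup V] [NormedSpace ℝ V]
    (F : EuclideanSpace ℝ (Fin d) → V) : EuclideanSpace ℝ (Fin d) → V :=
  fun x => -∑ i : Fin d, pderivV i (pderivV i F) x

/- ### Auxiliary material -/

/-- Matrix–vector multiplication as a continuous `ℝ`-bilinear map. -/
private def mulVecL (r : ℕ) :
    Matrix (Fin r) (Fin r) ℂ →L[ℝ] (Fin r → ℂ) →L[ℝ] (Fin r → ℂ) :=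
  LinearMap.toContinuousLinearMap <|
  { toFun := fun M => LinearMap.toContinuousLinearMap ((Matrix.mulVecLin M).restrictScalars ℝ)
    map_add' := by
      intro M N; ext v i
      simp [Matrix.add_mulVec]
    map_smul' := by
      intro a M; ext v i
      simp [Matrix.mulVec, dotProduct, Complex.real_smul, Finset.mul_sum, mul_assoc] }

private lemma mulVecL_apply {r : ℕ} (M : Matrix (Fin r) (Fin r) ℂ) (v : Fin r → ℂ) :
    mulVecL r M v = M.mulVec v := by
  simp [mulVecL]

private lemma pderivV_contDiff {d : ℕ} {V : Type*} [NormedAddCommGroup V] [NormedSpace ℝ V]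
    {n : ℕ∞} {u : EuclideanSpace ℝ (Fin d) → V} (hu : ContDiff ℝ (n + 1) u) (i : Fin d) :
    ContDiff ℝ n (pderivV i u) := by
  have h1 : ContDiff ℝ n (fderiv ℝ u) := hu.fderiv_right le_rfl
  exact (ContinuousLinearMap.apply ℝ V (EuclideanSpace.single i 1)).contDiff.comp h1

private lemma diff_mulVec {d r : ℕ} {G : EuclideanSpace ℝ (Fin d) → Matrix (Fin r) (Fin r) ℂ}
    {F : EuclideanSpace ℝ (Fin d) → Fin r → ℂ} {x : EuclideanSpace ℝ (Fin d)}
    (hG : DifferentiableAt ℝ G x) (hF : DifferentiableAt ℝ F x) :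
    DifferentiableAt ℝ (fun y => (G y).mulVec (F y)) x := by
  have h : (fun y => (G y).mulVec (F y)) = fun y => (mulVecL r (G y)) (F y) :=
    funext fun y => (mulVecL_apply _ _).symm
  rw [h]
  exact (((mulVecL r).differentiable.differentiableAt).comp x hG).clm_apply hF

private lemma pderivV_mulVec {d r : ℕ} (i : Fin d)
    {G : EuclideanSpace ℝ (Fin d) → Matrix (Fin r) (Fin r) ℂ}
    {F : EuclideanSpace ℝ (Fin d) → Fin r → ℂ} {x : EuclideanSpace ℝ (Fin d)}
    (hG : DifferentiableAt ℝ G x) (hF : DifferentiableAt ℝ F x) :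
    pderivV i (fun y => (G y).mulVec (F y)) x
      = (pderivV i G x).mulVec (F x) + (G x).mulVec (pderivV i F x) := by
  have h : (fun y => (G y).mulVec (F y)) = fun y => ((fun z => mulVecL r (G z)) y) (F y) :=
    funext fun y => (mulVecL_apply _ _).symm
  have hc : DifferentiableAt ℝ (fun z => mulVecL r (G z)) x :=
    ((mulVecL r).differentiable.differentiableAt).comp x hG
  have hfd : fderiv ℝ (fun z => mulVecL r (G z)) x = (mulVecL r).comp (fderiv ℝ G x) :=
    ((mulVecL r).hasFDerivAt.comp x hG.hasFDerivAt).fderiv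
  unfold pderivV
  rw [h, fderiv_clm_apply hc hF]
  simp [hfd, mulVecL_apply, add_comm]

private lemma pderivV_add {d : ℕ} {V : Type*} [NormedAddCommGroup V] [NormedSpace ℝ V]
    (i : Fin d) {u v : EuclideanSpace ℝ (Fin d) → V} {x : EuclideanSpace ℝ (Fin d)}
    (hu : DifferentiableAt ℝ u x) (hv : DifferentiableAt ℝ v x) :
    pderivV i (fun z => u z + v z) x = pderivV i u x + pderivV i v x := by
  unfold pderivV
  rw [fderiv_fun_add hu hv]; rfl

private lemma scale_pderiv {d : ℕ} {V : Type*} [NormedAddCommGroup V] [NormedSpace ℝ V]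
    {u : EuclideanSpace ℝ (Fin d) → V} (hu : Differentiable ℝ u)
    {t : ℝ} (ht : 1 ≤ t) (s : ℝ)
    (hscale : ∀ z : EuclideanSpace ℝ (Fin d), 1/2 < ‖z‖ → u (t • z) = s • u z)
    {y : EuclideanSpace ℝ (Fin d)} (hy : 1/2 < ‖y‖) (i : Fin d) :
    pderivV i u (t • y) = (t⁻¹ * s) • pderivV i u y := by
  have ht0 : (0:ℝ) < t := lt_of_lt_of_le one_pos ht
  set L : EuclideanSpace ℝ (Fin d) →L[ℝ] EuclideanSpace ℝ (Fin d) :=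
    t • ContinuousLinearMap.id ℝ (EuclideanSpace ℝ (Fin d)) with hL
  have hLapp : ∀ z, L z = t • z := fun z => rfl
  have hev : (fun z => u (t • z)) =ᶠ[nhds y] (fun z => s • u z) := by
    have hopen : IsOpen {z : EuclideanSpace ℝ (Fin d) | 1/2 < ‖z‖} :=
      isOpen_lt continuous_const continuous_norm
    filter_upwards [hopen.mem_nhds hy] with z hz
    exact hscale z hz
  have h1 : HasFDerivAt (fun z => u (t • z)) ((fderiv ℝ u (t • y)).comp L) y := by
    have := (hu (t • y)).hasFDerivAt.comp y L.hasFDerivAt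
    exact this
  have h2 : fderiv ℝ (fun z => u (t • z)) y = fderiv ℝ (fun z => s • u z) y :=
    Filter.EventuallyEq.fderiv_eq hev
  have h3 : fderiv ℝ (fun z => s • u z) y = s • fderiv ℝ u y := fderiv_const_smul (hu y) s
  have h4 : (fderiv ℝ u (t • y)).comp L = s • fderiv ℝ u y := by
    rw [← h1.fderiv, h2, h3]
  have h5 : t • (fderiv ℝ u (t • y) (EuclideanSpace.single i 1))
      = s • fderiv ℝ u y (EuclideanSpace.single i 1) := by
    have := congrArg (fun (T : EuclideanSpace ℝ (Fin d) →L[ℝ] V) =>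
      T (EuclideanSpace.single i 1)) h4
    simpa [ContinuousLinearMap.comp_apply, hLapp, _root_.map_smul] using this
  unfold pderivV
  rw [mul_smul, ← h5, smul_smul, inv_mul_cancel₀ (ne_of_gt ht0), one_smul]

private lemma bound_big {M t a : ℝ} (hM : 0 ≤ M) (ht : 1 ≤ t) (ha : a ≤ t⁻¹ * M) :
    a ≤ 2 * M * (1 + t)⁻¹ := by
  have ht0 : (0:ℝ) < t := lt_of_lt_of_le one_pos ht
  have h1t : (0:ℝ) < 1 + t := by linarith
  have key : M / t ≤ 2 * M / (1 + t) := by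
    rw [div_le_div_iff₀ ht0 h1t]
    nlinarith [mul_le_mul_of_nonneg_left ht hM]
  calc a ≤ t⁻¹ * M := ha
    _ = M / t := by ring
    _ ≤ 2 * M / (1 + t) := key
    _ = 2 * M * (1 + t)⁻¹ := by ring

private lemma bound_small {M n a : ℝ} (hM : 0 ≤ M) (hn : 0 ≤ n) (hn1 : n ≤ 1) (ha : a ≤ M) :
    a ≤ 2 * M * (1 + n)⁻¹ := by
  have h1n : (0:ℝ) < 1 + n := by linarith
  have key : M ≤ 2 * M / (1 + n) := by
    rw [le_div_iff₀ h1n]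
    nlinarith [mul_le_mul_of_nonneg_left hn1 hM]
  calc a ≤ M := ha
    _ ≤ 2 * M / (1 + n) := key
    _ = 2 * M * (1 + n)⁻¹ := by ring

/-- with `ψ` a smooth cutoff (supported in the closed ball of radius `1/2`, equal
to `1` on the closed ball of radius `1/4`, `0 ≤ ψ ≤ 1`) and
`g(x) = (1 − ψ(x)) Σ_j (x_j/|x|) c^j`, `g(0) = 0`: (i) `g` is smooth; (ii) `∂_i g` and `Δg` are
bounded by `C(1+|x|)^{−1}` in the operator norm on `M_r(ℂ)`; (iii) for every `C²` function
`f : ℝ^d → ℂ^r`, `Δ(g f) − g (Δ f) = −2 Σ_i (∂_i g)(∂_i f) + (Δ g) f`. -/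
theorem clifford_radial_cutoff_commutator (d r : ℕ) (hd : 1 ≤ d) (hr : 1 ≤ r)
    (c : Fin d → Matrix (Fin r) (Fin r) ℂ) (hc : CliffordFamily d r c)
    (ψ : EuclideanSpace ℝ (Fin d) → ℝ) (hψsmooth : ContDiff ℝ (⊤ : ℕ∞) ψ)
    (hψ0 : ∀ x, 0 ≤ ψ x) (hψ1 : ∀ x, ψ x ≤ 1)
    (hψsupp : tsupport ψ ⊆ Metric.closedBall (0 : EuclideanSpace ℝ (Fin d)) (1 / 2))
    (hψone : ∀ x ∈ Metric.closedBall (0 : EuclideanSpace ℝ (Fin d)) (1 / 4), ψ x = 1)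
    (g : EuclideanSpace ℝ (Fin d) → Matrix (Fin r) (Fin r) ℂ)
    (hg0 : g 0 = 0)
    (hgx : ∀ x : EuclideanSpace ℝ (Fin d), x ≠ 0 →
      g x = (1 - ψ x) • ∑ j : Fin d, (x j / ‖x‖) • c j) :
    ContDiff ℝ (⊤ : ℕ∞) g ∧
    (∃ C : ℝ, ∀ x : EuclideanSpace ℝ (Fin d), ∀ i : Fin d,
      ‖pderivV i g x‖ ≤ C * (1 + ‖x‖)⁻¹ ∧ ‖laplacianV g x‖ ≤ C * (1 + ‖x‖)⁻¹) ∧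
    (∀ f : EuclideanSpace ℝ (Fin d) → (Fin r → ℂ), ContDiff ℝ 2 f →
      ∀ x : EuclideanSpace ℝ (Fin d),
        laplacianV (fun y => (g y).mulVec (f y)) x - (g x).mulVec (laplacianV f x) =
          (-2 : ℂ) • (∑ i : Fin d, (pderivV i g x).mulVec (pderivV i f x)) +
            (laplacianV g x).mulVec (f x)) := by
  -- (i) smoothness of g
  have hgsmooth : ContDiff ℝ (⊤ : ℕ∞) g := by
    rw [contDiff_iff_contDiffAt]
    intro x
    by_cases hx : ‖x‖ < 1/4
    · have hxball : x ∈ Metric.ball (0 : EuclideanSpace ℝ (Fin d)) (1/4) := by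
        simpa [Metric.mem_ball, dist_zero_right] using hx
      have hev : g =ᶠ[nhds x] (fun _ => 0) := by
        filter_upwards [Metric.isOpen_ball.mem_nhds hxball] with z hz
        by_cases hz0 : z = 0
        · simpa [hz0] using hg0
        · have hz4 : z ∈ Metric.closedBall (0 : EuclideanSpace ℝ (Fin d)) (1/4) :=
            Metric.ball_subset_closedBall hz
          rw [hgx z hz0, hψone z hz4, sub_self, zero_smul]
      exact contDiffAt_const.congr_of_eventuallyEq hev
    · push_neg at hx
      have hx0 : x ≠ 0 := by
        intro h; rw [h, norm_zero] at hx; norm_num at hx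
      have hev : g =ᶠ[nhds x]
          (fun z => (1 - ψ z) • ∑ j : Fin d, (z j / ‖z‖) • c j) := by
        filter_upwards [isOpen_compl_singleton.mem_nhds hx0] with z hz
        exact hgx z hz
      refine ContDiffAt.congr_of_eventuallyEq ?_ hev
      refine ContDiffAt.smul (contDiffAt_const.sub hψsmooth.contDiffAt) ?_
      refine ContDiffAt.sum fun j _ => ?_
      refine ContDiffAt.smul (?_ : ContDiffAt ℝ _ (fun z : EuclideanSpace ℝ (Fin d) => z j / ‖z‖) x) contDiffAt_const
      have hproj : ContDiff ℝ (⊤ : ℕ∞) (fun z : EuclideanSpace ℝ (Fin d) => z j) :=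
        (EuclideanSpace.proj j : EuclideanSpace ℝ (Fin d) →L[ℝ] ℝ).contDiff
      exact ContDiffAt.div hproj.contDiffAt
        (contDiffAt_norm ℝ hx0) (norm_ne_zero_iff.2 hx0)
  have hone : ((⊤ : ℕ∞) : WithTop ℕ∞) ≠ 0 := by simp
  have hgdiff : Differentiable ℝ g := hgsmooth.differentiable hone
  have hg' : ∀ i : Fin d, ContDiff ℝ (⊤ : ℕ∞) (pderivV i g) :=
    fun i => pderivV_contDiff (n := ⊤) hgsmooth i
  have hg'' : ∀ i : Fin d, ContDiff ℝ (⊤ : ℕ∞) (pderivV i (pderivV i g)) :=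
    fun i => pderivV_contDiff (n := ⊤) (hg' i) i
  -- ψ vanishes outside the ball of radius 1/2
  have hψ_zero : ∀ z : EuclideanSpace ℝ (Fin d), 1/2 < ‖z‖ → ψ z = 0 := by
    intro z hz
    apply image_eq_zero_of_notMem_tsupport
    intro hmem
    have := hψsupp hmem
    rw [Metric.mem_closedBall, dist_zero_right] at this
    linarith
  -- homogeneity of g
  have hghom : ∀ t : ℝ, 1 ≤ t → ∀ z : EuclideanSpace ℝ (Fin d), 1/2 < ‖z‖ →
      g (t • z) = (1 : ℝ) • g z := by
    intro t ht z hz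
    have ht0 : (0:ℝ) < t := lt_of_lt_of_le one_pos ht
    have hz0 : z ≠ 0 := by
      intro h; rw [h, norm_zero] at hz; norm_num at hz
    have htz0 : t • z ≠ 0 := smul_ne_zero (ne_of_gt ht0) hz0
    have hnorm : ‖t • z‖ = t * ‖z‖ := by
      rw [norm_smul, Real.norm_eq_abs, abs_of_pos ht0]
    have hbig : 1/2 < ‖t • z‖ := by
      rw [hnorm]
      calc (1:ℝ)/2 < ‖z‖ := hz
        _ = 1 * ‖z‖ := (one_mul _).symm
        _ ≤ t * ‖z‖ := by
            exact mul_le_mul_of_nonneg_right ht (norm_nonneg z)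
    rw [hgx _ htz0, hgx _ hz0, hψ_zero _ hbig, hψ_zero _ hz, one_smul]
    congr 1
    refine Finset.sum_congr rfl fun j _ => ?_
    congr 1
    have happ : (t • z) j = t * z j := rfl
    rw [happ, hnorm, mul_div_mul_left _ _ (ne_of_gt ht0)]
  -- scaling of derivatives
  have hscale1 : ∀ t : ℝ, 1 ≤ t → ∀ z : EuclideanSpace ℝ (Fin d), 1/2 < ‖z‖ → ∀ i : Fin d,
      pderivV i g (t • z) = (t⁻¹ * 1) • pderivV i g z :=
    fun t ht z hz i => scale_pderiv hgdiff ht 1 (fun w hw => hghom t ht w hw) hz i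
  have hscale2 : ∀ t : ℝ, 1 ≤ t → ∀ z : EuclideanSpace ℝ (Fin d), 1/2 < ‖z‖ → ∀ i : Fin d,
      pderivV i (pderivV i g) (t • z) = (t⁻¹ * (t⁻¹ * 1)) • pderivV i (pderivV i g) z :=
    fun t ht z hz i =>
      scale_pderiv ((hg' i).differentiable hone) ht (t⁻¹ * 1)
        (fun w hw => hscale1 t ht w hw i) hz i
  have hscaleL : ∀ t : ℝ, 1 ≤ t → ∀ z : EuclideanSpace ℝ (Fin d), 1/2 < ‖z‖ →
      laplacianV g (t • z) = (t⁻¹ * (t⁻¹ * 1)) • laplacianV g z := by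
    intro t ht z hz
    unfold laplacianV
    rw [Finset.sum_congr rfl fun i _ => hscale2 t ht z hz i, ← Finset.smul_sum, smul_neg]
  -- continuity and bound on the unit ball
  have hfc : Continuous (fderiv ℝ g) :=
    ((hgsmooth.fderiv_right (m := ((⊤ : ℕ∞) : WithTop ℕ∞)) (le_of_eq rfl)).continuous)
  have hlapc : Continuous (laplacianV g) := by
    unfold laplacianV
    exact (continuous_finset_sum Finset.univ fun i _ => (hg'' i).continuous).neg
  obtain ⟨M, hM⟩ := (isCompact_closedBall (0 : EuclideanSpace ℝ (Fin d)) 1).exists_bound_of_continuousOn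
    ((hfc.norm.add hlapc.norm).continuousOn)
  have hM0 : 0 ≤ M := by
    have := hM 0 (Metric.mem_closedBall_self (by norm_num))
    exact le_trans (norm_nonneg _) this
  have hMf : ∀ y ∈ Metric.closedBall (0 : EuclideanSpace ℝ (Fin d)) 1, ‖fderiv ℝ g y‖ ≤ M := by
    intro y hy
    have h := hM y hy
    have h2 : ‖fderiv ℝ g y‖ + ‖laplacianV g y‖ ≤ M :=
      le_trans (le_abs_self _) h
    nlinarith [norm_nonneg (laplacianV g y)]
  have hML : ∀ y ∈ Metric.closedBall (0 : EuclideanSpace ℝ (Fin d)) 1, ‖laplacianV g y‖ ≤ M := by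
    intro y hy
    have h := hM y hy
    have h2 : ‖fderiv ℝ g y‖ + ‖laplacianV g y‖ ≤ M :=
      le_trans (le_abs_self _) h
    nlinarith [norm_nonneg (fderiv ℝ g y)]
  have hpd_le : ∀ (y : EuclideanSpace ℝ (Fin d)) (i : Fin d),
      ‖pderivV i g y‖ ≤ ‖fderiv ℝ g y‖ := by
    intro y i
    have := (fderiv ℝ g y).le_opNorm (EuclideanSpace.single i (1:ℝ))
    simpa [pderivV, EuclideanSpace.norm_single] using this
  refine ⟨hgsmooth, ⟨2 * M, ?_⟩, ?_⟩
  · -- part (ii)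
    intro x i
    by_cases h1 : ‖x‖ ≤ 1
    · have hxball : x ∈ Metric.closedBall (0 : EuclideanSpace ℝ (Fin d)) 1 := by
        simpa [Metric.mem_closedBall, dist_zero_right] using h1
      constructor
      · exact bound_small hM0 (norm_nonneg x) h1
          (le_trans (hpd_le x i) (hMf x hxball))
      · exact bound_small hM0 (norm_nonneg x) h1 (hML x hxball)
    · push_neg at h1
      set t : ℝ := ‖x‖ with htdef
      have ht1 : 1 ≤ t := le_of_lt h1
      have ht0 : (0:ℝ) < t := lt_of_lt_of_le one_pos ht1
      set y : EuclideanSpace ℝ (Fin d) := t⁻¹ • x with hydef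
      have hyn : ‖y‖ = 1 := by
        rw [hydef, norm_smul, Real.norm_eq_abs, abs_of_pos (inv_pos.2 ht0), ← htdef,
          inv_mul_cancel₀ (ne_of_gt ht0)]
      have hty : t • y = x := by
        rw [hydef, smul_smul, mul_inv_cancel₀ (ne_of_gt ht0), one_smul]
      have hyball : y ∈ Metric.closedBall (0 : EuclideanSpace ℝ (Fin d)) 1 := by
        simp [Metric.mem_closedBall, dist_zero_right, hyn]
      have hyhalf : 1/2 < ‖y‖ := by rw [hyn]; norm_num
      constructor
      · have heq : pderivV i g x = (t⁻¹ * 1) • pderivV i g y := by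
          rw [← hty]; exact hscale1 t ht1 y hyhalf i
        have hnorm : ‖pderivV i g x‖ = t⁻¹ * ‖pderivV i g y‖ := by
          rw [heq, norm_smul, Real.norm_eq_abs, mul_one, abs_of_pos (inv_pos.2 ht0)]
        refine bound_big hM0 ht1 ?_
        rw [hnorm]
        exact mul_le_mul_of_nonneg_left (le_trans (hpd_le y i) (hMf y hyball))
          (le_of_lt (inv_pos.2 ht0))
      · have heq : laplacianV g x = (t⁻¹ * (t⁻¹ * 1)) • laplacianV g y := by
          rw [← hty]; exact hscaleL t ht1 y hyhalf
        have hti : t⁻¹ ≤ 1 := by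
          rw [inv_le_one_iff₀]; right; exact ht1
        have hnorm : ‖laplacianV g x‖ = t⁻¹ * (t⁻¹ * ‖laplacianV g y‖) := by
          rw [heq, norm_smul, Real.norm_eq_abs, mul_one, abs_of_pos (mul_pos (inv_pos.2 ht0) (inv_pos.2 ht0))]
          ring
        refine bound_big hM0 ht1 ?_
        rw [hnorm]
        have hy1 : t⁻¹ * ‖laplacianV g y‖ ≤ M :=
          le_trans (mul_le_of_le_one_left (norm_nonneg _) hti) (hML y hyball)
        exact mul_le_mul_of_nonneg_left hy1 (le_of_lt (inv_pos.2 ht0))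
  · -- part (iii)
    intro f hf x
    have hf2 : ContDiff ℝ ((1 : ℕ∞) + 1) f := by
      exact_mod_cast hf
    have hfdiff : Differentiable ℝ f := hf.differentiable two_ne_zero
    have hf1 : ∀ i : Fin d, ContDiff ℝ (1 : ℕ∞) (pderivV i f) :=
      fun i => pderivV_contDiff hf2 i
    have hf1d : ∀ i : Fin d, Differentiable ℝ (pderivV i f) :=
      fun i => (hf1 i).differentiable one_ne_zero
    -- first Leibniz
    have step1 : ∀ i : Fin d, (pderivV i (fun y => (g y).mulVec (f y)))
        = fun z => (pderivV i g z).mulVec (f z) + (g z).mulVec (pderivV i f z) :=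
      fun i => funext fun z => pderivV_mulVec i (hgdiff z) (hfdiff z)
    have step2 : ∀ i : Fin d,
        pderivV i (pderivV i (fun y => (g y).mulVec (f y))) x
          = ((pderivV i (pderivV i g) x).mulVec (f x)
              + (pderivV i g x).mulVec (pderivV i f x))
            + ((pderivV i g x).mulVec (pderivV i f x)
              + (g x).mulVec (pderivV i (pderivV i f) x)) := by
      intro i
      rw [step1 i]
      rw [pderivV_add i (diff_mulVec (((hg' i).differentiable hone) x) (hfdiff x))
        (diff_mulVec (hgdiff x) (hf1d i x))]
      rw [pderivV_mulVec i (((hg' i).differentiable hone) x) (hfdiff x),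
        pderivV_mulVec i (hgdiff x) (hf1d i x)]
    -- final assembly
    have hGlap : (g x).mulVec (laplacianV f x)
        = -∑ i : Fin d, (g x).mulVec (pderivV i (pderivV i f) x) := by
      unfold laplacianV
      rw [← mulVecL_apply, map_neg, map_sum]
      simp [mulVecL_apply]
    have hlapG : (laplacianV g x).mulVec (f x)
        = -∑ i : Fin d, (pderivV i (pderivV i g) x).mulVec (f x) := by
      unfold laplacianV
      rw [← mulVecL_apply, map_neg, map_sum]
      simp [mulVecL_apply]
    have hsmul2 : (-2 : ℂ) • (∑ i : Fin d, (pderivV i g x).mulVec (pderivV i f x))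
        = -∑ i : Fin d, ((pderivV i g x).mulVec (pderivV i f x)
            + (pderivV i g x).mulVec (pderivV i f x)) := by
      rw [neg_smul, two_smul ℂ]
      rw [← Finset.sum_add_distrib]
    have hlap : laplacianV (fun y => (g y).mulVec (f y)) x
        = -∑ i : Fin d, (((pderivV i (pderivV i g) x).mulVec (f x)
              + (pderivV i g x).mulVec (pderivV i f x))
            + ((pderivV i g x).mulVec (pderivV i f x)
              + (g x).mulVec (pderivV i (pderivV i f) x))) := by
      unfold laplacianV
      rw [Finset.sum_congr rfl fun i _ => step2 i]
    rw [hlap, hGlap, hlapG, hsmul2]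
    simp only [Finset.sum_add_distrib]
    abel
end
end
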